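/- For μ ≠ 0 and the filter G(μ) = (I + μ²AᵀΔᵀΔA)⁻¹ with A the second-difference matrix and Δ the first-difference matrix, G(μ)x = x holds if and only if ΔA x = 0, i.e., the filter passes a signal through unchanged exactly when the signal is a quadratic polynomial in the time index. -/
import Mathlib


open Matrix

/-- For `μ ≠ 0` and `G(μ) = (I + μ²AᵀΔᵀΔA)⁻¹`, with `A` the second-difference matrix and
`Δ` the first-difference matrix, `G(μ)x = x` if and only if `ΔA x = 0`. -/
theorem stmt_12 (T : ℕ) (hT : 4 ≤ T) (μ : ℝ) (hμ : μ ≠ 0)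
    (A : Matrix (Fin (T - 2)) (Fin T) ℝ)
    (hA : ∀ (x : Fin T → ℝ) (t : Fin (T - 2)),
      A.mulVec x t = x ⟨(t : ℕ) + 2, by have := t.isLt; omega⟩ -
        2 * x ⟨(t : ℕ) + 1, by have := t.isLt; omega⟩ +
        x ⟨(t : ℕ), by have := t.isLt; omega⟩)
    (D : Matrix (Fin (T - 3)) (Fin (T - 2)) ℝ)
    (hD : ∀ (k : Fin (T - 3)) (j : Fin (T - 2)),
      D k j = if (j : ℕ) = (k : ℕ) then -1
        else if (j : ℕ) = (k : ℕ) + 1 then 1 else 0)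
    (G : Matrix (Fin T) (Fin T) ℝ)
    (hG : G = ((1 : Matrix (Fin T) (Fin T) ℝ) + μ ^ 2 • (Aᵀ * Dᵀ * D * A))⁻¹) :
    ∀ x : Fin T → ℝ, G.mulVec x = x ↔ (D * A).mulVec x = 0 := by
  set C : Matrix (Fin (T - 3)) (Fin T) ℝ := D * A with hC
  -- rewrite the smul term using μ • C
  have hM : μ ^ 2 • (Aᵀ * Dᵀ * D * A) = (μ • C)ᵀ * (μ • C) := by
    rw [transpose_smul, smul_mul, Matrix.mul_smul, smul_smul, transpose_mul, Matrix.mul_assoc,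
      ← pow_two]
  set B : Matrix (Fin T) (Fin T) ℝ :=
    (1 : Matrix (Fin T) (Fin T) ℝ) + μ ^ 2 • (Aᵀ * Dᵀ * D * A) with hB
  have hpsd : ((μ • C)ᵀ * (μ • C)).PosSemidef := by
    have := Matrix.posSemidef_conjTranspose_mul_self (μ • C)
    simpa using this
  have hpd : B.PosDef := by
    rw [hB, hM]
    exact Matrix.PosDef.add_posSemidef Matrix.PosDef.one hpsd
  have hdet : IsUnit B.det := hpd.det_pos.ne'.isUnit
  have hBG : B * G = 1 := by rw [hG]; exact Matrix.mul_nonsing_inv B hdet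
  have hGB : G * B = 1 := by rw [hG]; exact Matrix.nonsing_inv_mul B hdet
  intro x
  constructor
  · intro hx
    have hBx : B.mulVec x = x := by
      calc B.mulVec x = B.mulVec (G.mulVec x) := by rw [hx]
        _ = (B * G).mulVec x := by rw [Matrix.mulVec_mulVec]
        _ = x := by rw [hBG, Matrix.one_mulVec]
    have hMx : ((μ • C)ᵀ * (μ • C)).mulVec x = 0 := by
      have : x + ((μ • C)ᵀ * (μ • C)).mulVec x = x := by
        rw [← hM]
        simpa [hB, Matrix.add_mulVec, Matrix.one_mulVec] using hBx
      have h2 := congrArg (· - x) this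
      simpa using h2
    have hnorm : ((μ • C).mulVec x) ⬝ᵥ ((μ • C).mulVec x) = 0 := by
      have : x ⬝ᵥ ((μ • C)ᵀ * (μ • C)).mulVec x = 0 := by rw [hMx]; simp
      rwa [← Matrix.mulVec_mulVec, Matrix.dotProduct_mulVec, Matrix.vecMul_transpose] at this
    have hCx : (μ • C).mulVec x = 0 := by
      have := dotProduct_self_eq_zero.mp hnorm
      exact this
    have : μ • C.mulVec x = 0 := by simpa [Matrix.smul_mulVec] using hCx
    have := smul_eq_zero.mp this
    tauto
  · intro hx
    have hMx : ((μ • C)ᵀ * (μ • C)).mulVec x = 0 := by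
      rw [← Matrix.mulVec_mulVec, Matrix.smul_mulVec, hx]
      simp
    have hBx : B.mulVec x = x := by
      rw [hB, hM, Matrix.add_mulVec, Matrix.one_mulVec, hMx, add_zero]
    calc G.mulVec x = G.mulVec (B.mulVec x) := by rw [hBx]
      _ = (G * B).mulVec x := by rw [Matrix.mulVec_mulVec]
      _ = x := by rw [hGB, Matrix.one_mulVec]
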